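/- The space of weakly continuous operators on M(Ω) (operators given by bounded transition kernels) is a vector lattice with the ordering inherited from L(M(Ω)): for every weakly continuous operator T with kernel k, the operator with kernel |k| is an upper bound of T and −T, and is the least such bound among weakly continuous operators. -/

import Mathlib

open MeasureTheory Topology Filter
open scoped NNReal ENNReal BoundedContinuousFunction

noncomputable def sInt {Ω : Type*} [MeasurableSpace Ω] (μ : SignedMeasure Ω) (f : Ω → ℝ) : ℝ :=
  (∫ x, f x ∂μ.toJordanDecomposition.posPart) - ∫ x, f x ∂μ.toJordanDecomposition.negPart

def IsTransKernel {Ω : Type*} [MeasurableSpace Ω] (k : Ω → SignedMeasure Ω) : Prop :=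
  ∀ A : Set Ω, MeasurableSet A → Measurable fun x => k x A

def IsBddKernel {Ω : Type*} [MeasurableSpace Ω] (k : Ω → SignedMeasure Ω) : Prop :=
  IsTransKernel k ∧ ∃ C : ℝ≥0, ∀ x, (k x).totalVariation Set.univ ≤ C

def GivenByKernel {Ω : Type*} [MeasurableSpace Ω]
    (T : SignedMeasure Ω →ₗ[ℝ] SignedMeasure Ω) (k : Ω → SignedMeasure Ω) : Prop :=
  ∀ (μ : SignedMeasure Ω) (A : Set Ω), MeasurableSet A → T μ A = sInt μ (fun x => k x A)

def IsBdMeasurable {Ω : Type*} [MeasurableSpace Ω] (f : Ω → ℝ) : Prop :=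
  Measurable f ∧ ∃ C : ℝ, ∀ x, |f x| ≤ C

instance totalVariation_isFiniteMeasure {Ω : Type*} [MeasurableSpace Ω] (μ : SignedMeasure Ω) :
    IsFiniteMeasure μ.totalVariation := by
  unfold SignedMeasure.totalVariation; infer_instance

/-!
The operator `U` is `μ ↦ |k| ∘ₘ μ⁺ - |k| ∘ₘ μ⁻`. Its kernel `x ↦ |k x|` is measurable because,
on a countably generated space, `|k x| A` is the supremum of `k x (A \ B) - k x (A ∩ B)` over `B`
in a countable generating algebra: the supremum over all measurable `B` is attained at a Hahn
negative set, which the algebra approximates in `|k x|`-measure. The pointwise inequalities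
`±k x ≤ |k x|` integrate against positive measures to `±T ≤ U`. Conversely, evaluating an upper
bound `S` with kernel `m` at Dirac masses gives `±k x ≤ m x`, hence `|k x| ≤ m x` by the Hahn
decomposition of `k x`, which integrates to `U ≤ S`.
-/

open ProbabilityTheory MeasurableSpace
open scoped symmDiff

namespace MeasureTheory.SignedMeasure

variable {Ω : Type*} [MeasurableSpace Ω] (μ : SignedMeasure Ω)

lemma eq_posPart_sub_negPart :
    μ = μ.toJordanDecomposition.posPart.toSignedMeasure
      - μ.toJordanDecomposition.negPart.toSignedMeasure :=
  μ.toSignedMeasure_toJordanDecomposition.symm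

lemma apply_sdiff {A B : Set Ω} (hA : MeasurableSet A) (hB : MeasurableSet B) :
    μ (A \ B) = μ A - μ (A ∩ B) := by
  rw [← VectorMeasure.of_add_of_sdiff (hA.inter hB) hA Set.inter_subset_left,
    Set.sdiff_self_inter]
  ring

lemma abs_apply_sub_apply_le {C D : Set Ω} (hC : MeasurableSet C) (hD : MeasurableSet D) :
    |μ C - μ D| ≤ μ.totalVariation.real (C ∆ D) := by
  have hCD : μ C - μ D = μ (C \ D) - μ (D \ C) := by
    rw [μ.apply_sdiff hC hD, μ.apply_sdiff hD hC, Set.inter_comm]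
    ring
  rw [hCD, measureReal_symmDiff_eq hC hD]
  exact (abs_sub _ _).trans (add_le_add (μ.norm_le_totalVariation _) (μ.norm_le_totalVariation _))

lemma sub_le_totalVariation (A : Set Ω) {B : Set Ω} (hB : MeasurableSet B) :
    μ (A \ B) - μ (A ∩ B) ≤ μ.totalVariation.real A := by
  rw [← measureReal_inter_add_sdiff (s := A) hB]
  linarith [abs_le.1 (μ.norm_le_totalVariation (A ∩ B)),
    abs_le.1 (μ.norm_le_totalVariation (A \ B))]

lemma exists_totalVariation_real_eq {A : Set Ω} (hA : MeasurableSet A) :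
    ∃ N, MeasurableSet N ∧ μ.totalVariation.real A = μ (A \ N) - μ (A ∩ N) := by
  obtain ⟨N, hN, hpos, hneg⟩ := μ.toJordanDecomposition.mutuallySingular
  set p := μ.toJordanDecomposition.posPart
  set n := μ.toJordanDecomposition.negPart
  have hp : p.real (A ∩ N) = 0 :=
    measureReal_mono_null Set.inter_subset_right (by simp [measureReal_def, hpos])
  have hn : n.real (A \ N) = 0 :=
    measureReal_mono_null (Set.sdiff_subset_compl A N) (by simp [measureReal_def, hneg])
  refine ⟨N, hN, ?_⟩
  rw [μ.apply_eq_posPart_real_sub_negPart_real (hA.diff hN),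
    μ.apply_eq_posPart_real_sub_negPart_real (hA.inter hN), totalVariation,
    measureReal_add_apply, ← measureReal_inter_add_sdiff (s := A) hN (μ := p),
    ← measureReal_inter_add_sdiff (s := A) hN (μ := n)]
  linarith

lemma totalVariation_real_eq_iSup {𝒜 : Set (Set Ω)} (h𝒜 : μ.totalVariation.MeasureDense 𝒜)
    {A : Set Ω} (hA : MeasurableSet A) :
    μ.totalVariation.real A = ⨆ B : 𝒜, (μ (A \ B) - μ (A ∩ B)) := by
  have : Nonempty 𝒜 := h𝒜.nonempty.to_subtype
  have hle (B : 𝒜) : μ (A \ B) - μ (A ∩ B) ≤ μ.totalVariation.real A :=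
    μ.sub_le_totalVariation A (h𝒜.measurable B B.2)
  refine le_antisymm (le_of_forall_pos_le_add fun ε hε => ?_) (ciSup_le hle)
  obtain ⟨N, hN, hNeq⟩ := μ.exists_totalVariation_real_eq hA
  obtain ⟨B, hB𝒜, hNB⟩ := h𝒜.approx N hN (measure_ne_top _ _) (ε / 2) (by positivity)
  have hB := h𝒜.measurable B hB𝒜
  have hclose : |μ (A ∩ N) - μ (A ∩ B)| < ε / 2 := by
    refine (μ.abs_apply_sub_apply_le (hA.inter hN) (hA.inter hB)).trans_lt ?_
    rw [← Set.inter_symmDiff_distrib_left]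
    exact (measureReal_mono Set.inter_subset_right).trans_lt (ENNReal.toReal_lt_of_lt_ofReal hNB)
  have hbdd : BddAbove (Set.range fun B : 𝒜 => μ (A \ B) - μ (A ∩ B)) :=
    ⟨_, Set.forall_mem_range.2 hle⟩
  have hsup := le_ciSup hbdd ⟨B, hB𝒜⟩
  rw [μ.apply_sdiff hA hN] at hNeq
  rw [μ.apply_sdiff hA hB] at hsup
  linarith [abs_lt.1 hclose]

lemma le_totalVariation : μ ≤ μ.totalVariation.toSignedMeasure := by
  refine VectorMeasure.le_iff.2 fun A hA => ?_
  rw [Measure.toSignedMeasure_apply_measurable hA]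
  exact (le_abs_self _).trans (μ.norm_le_totalVariation A)

lemma neg_le_totalVariation : -μ ≤ μ.totalVariation.toSignedMeasure := by
  simpa [totalVariation_neg] using (-μ).le_totalVariation

lemma totalVariation_le {ν : SignedMeasure Ω} (h : μ ≤ ν) (h' : -μ ≤ ν) :
    μ.totalVariation.toSignedMeasure ≤ ν := by
  refine VectorMeasure.le_iff.2 fun A hA => ?_
  obtain ⟨N, hN, hNeq⟩ := μ.exists_totalVariation_real_eq hA
  have h₁ := VectorMeasure.le_iff.1 h (A \ N) (hA.diff hN)
  have h₂ := VectorMeasure.le_iff.1 h' (A ∩ N) (hA.inter hN)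
  rw [neg_apply] at h₂
  rw [Measure.toSignedMeasure_apply_measurable hA, hNeq]
  linarith [ν.apply_sdiff hA hN]

end MeasureTheory.SignedMeasure

section sInt

variable {Ω : Type*} [MeasurableSpace Ω]

lemma IsBdMeasurable.integrable {f : Ω → ℝ} (hf : IsBdMeasurable f) (ν : Measure Ω)
    [IsFiniteMeasure ν] : Integrable f ν :=
  let ⟨hm, C, hC⟩ := hf
  .of_bound hm.aestronglyMeasurable C (ae_of_all _ hC)

lemma IsBdMeasurable.neg {f : Ω → ℝ} (hf : IsBdMeasurable f) : IsBdMeasurable fun x => -f x :=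
  let ⟨hm, C, hC⟩ := hf
  ⟨hm.neg, C, fun x => (abs_neg (f x)).trans_le (hC x)⟩

lemma sInt_toSignedMeasure_sub (p n : Measure Ω) [IsFiniteMeasure p] [IsFiniteMeasure n]
    {f : Ω → ℝ} (hf : IsBdMeasurable f) :
    sInt (p.toSignedMeasure - n.toSignedMeasure) f = ∫ x, f x ∂p - ∫ x, f x ∂n := by
  set μ := p.toSignedMeasure - n.toSignedMeasure
  have hsum : μ.toJordanDecomposition.posPart + n = p + μ.toJordanDecomposition.negPart := by
    rw [← Measure.toSignedMeasure_eq_toSignedMeasure_iff, Measure.toSignedMeasure_add,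
      Measure.toSignedMeasure_add, ← sub_eq_sub_iff_add_eq_add]
    exact μ.toSignedMeasure_toJordanDecomposition
  have hint := congrArg (fun ν : Measure Ω => ∫ x, f x ∂ν) hsum
  simp only [integral_add_measure (hf.integrable _) (hf.integrable _)] at hint
  rw [sInt]
  linarith

lemma sInt_toSignedMeasure (p : Measure Ω) [IsFiniteMeasure p] {f : Ω → ℝ}
    (hf : IsBdMeasurable f) : sInt p.toSignedMeasure f = ∫ x, f x ∂p := by
  simpa using sInt_toSignedMeasure_sub p 0 hf

lemma sInt_add_measure (μ ν : SignedMeasure Ω) {f : Ω → ℝ} (hf : IsBdMeasurable f) :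
    sInt (μ + ν) f = sInt μ f + sInt ν f := by
  have : μ + ν = (μ.toJordanDecomposition.posPart + ν.toJordanDecomposition.posPart).toSignedMeasure
      - (μ.toJordanDecomposition.negPart + ν.toJordanDecomposition.negPart).toSignedMeasure := by
    rw [Measure.toSignedMeasure_add, Measure.toSignedMeasure_add]
    conv_lhs => rw [SignedMeasure.eq_posPart_sub_negPart μ, SignedMeasure.eq_posPart_sub_negPart ν]
    abel
  rw [this, sInt_toSignedMeasure_sub _ _ hf,
    integral_add_measure (hf.integrable _) (hf.integrable _),
    integral_add_measure (hf.integrable _) (hf.integrable _), sInt, sInt]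
  ring

lemma sInt_neg_measure (μ : SignedMeasure Ω) {f : Ω → ℝ} (hf : IsBdMeasurable f) :
    sInt (-μ) f = -sInt μ f := by
  conv_lhs => rw [SignedMeasure.eq_posPart_sub_negPart μ, neg_sub]
  rw [sInt_toSignedMeasure_sub _ _ hf, sInt]
  ring

lemma sInt_nnreal_smul_measure (c : ℝ≥0) (μ : SignedMeasure Ω) {f : Ω → ℝ} (hf : IsBdMeasurable f) :
    sInt (c • μ) f = c * sInt μ f := by
  conv_lhs => rw [SignedMeasure.eq_posPart_sub_negPart μ, smul_sub, ← Measure.toSignedMeasure_smul,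
    ← Measure.toSignedMeasure_smul]
  rw [sInt_toSignedMeasure_sub _ _ hf, integral_smul_nnreal_measure, integral_smul_nnreal_measure,
    sInt, NNReal.smul_def, NNReal.smul_def, smul_eq_mul, smul_eq_mul]
  ring

lemma sInt_smul_measure (r : ℝ) (μ : SignedMeasure Ω) {f : Ω → ℝ} (hf : IsBdMeasurable f) :
    sInt (r • μ) f = r * sInt μ f := by
  rcases le_total 0 r with hr | hr
  · lift r to ℝ≥0 using hr
    exact sInt_nnreal_smul_measure r μ hf
  · have hr' : ((-r).toNNReal : ℝ) = -r := Real.coe_toNNReal _ (neg_nonneg.2 hr)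
    have : r • μ = (-r).toNNReal • -μ := by rw [NNReal.smul_def, hr']; exact (neg_smul_neg r μ).symm
    rw [this, sInt_nnreal_smul_measure _ _ hf, sInt_neg_measure _ hf, hr']
    ring

lemma sInt_neg (μ : SignedMeasure Ω) (f : Ω → ℝ) :
    sInt μ (fun x => -f x) = -sInt μ f := by
  simp only [sInt, integral_neg]
  ring

lemma sInt_mono {μ : SignedMeasure Ω} (hμ : 0 ≤ μ) {f g : Ω → ℝ} (hf : IsBdMeasurable f)
    (hg : IsBdMeasurable g) (hfg : f ≤ g) : sInt μ f ≤ sInt μ g := by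
  have hμ' : 0 ≤[Set.univ] μ := (VectorMeasure.le_restrict_univ_iff_le _ _).2 hμ
  rw [← μ.toMeasureOfZeroLE_toSignedMeasure hμ', sInt_toSignedMeasure _ hf,
    sInt_toSignedMeasure _ hg]
  exact integral_mono (hf.integrable _) (hg.integrable _) hfg

end sInt

namespace ProbabilityTheory.Kernel

variable {α β : Type*} [MeasurableSpace α] [MeasurableSpace β] (κ : Kernel α β) [IsFiniteKernel κ]

lemma isBdMeasurable_real_apply {A : Set β} (hA : MeasurableSet A) :
    IsBdMeasurable fun x => (κ x).real A :=
  ⟨(κ.measurable_coe hA).ennreal_toReal, κ.bound.toReal, fun x => by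
    rw [abs_of_nonneg measureReal_nonneg]
    exact ENNReal.toReal_mono κ.bound_ne_top (κ.measure_le_bound x A)⟩

lemma comp_real_apply (μ : Measure α) [IsFiniteMeasure μ] {A : Set β} (hA : MeasurableSet A) :
    (κ ∘ₘ μ).real A = ∫ x, (κ x).real A ∂μ := by
  rw [measureReal_def, Measure.bind_apply hA κ.aemeasurable,
    ← integral_toReal (κ.measurable_coe hA).aemeasurable (ae_of_all _ fun x => measure_lt_top _ _)]
  rfl

noncomputable def signedComp : SignedMeasure α →ₗ[ℝ] SignedMeasure β where
  toFun μ := (κ ∘ₘ μ.toJordanDecomposition.posPart).toSignedMeasure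
    - (κ ∘ₘ μ.toJordanDecomposition.negPart).toSignedMeasure
  map_add' μ ν := by
    ext A hA
    simp only [add_apply, sub_apply, Measure.toSignedMeasure_apply_measurable hA,
      comp_real_apply _ _ hA]
    exact sInt_add_measure μ ν (κ.isBdMeasurable_real_apply hA)
  map_smul' r μ := by
    ext A hA
    simp only [smul_apply, sub_apply, Measure.toSignedMeasure_apply_measurable hA,
      comp_real_apply _ _ hA, RingHom.id_apply, smul_eq_mul]
    exact sInt_smul_measure r μ (κ.isBdMeasurable_real_apply hA)

lemma signedComp_apply (μ : SignedMeasure α) {A : Set β} (hA : MeasurableSet A) :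
    κ.signedComp μ A = sInt μ fun x => (κ x).real A := by
  simp only [signedComp, LinearMap.coe_mk, AddHom.coe_mk, sub_apply,
    Measure.toSignedMeasure_apply_measurable hA, comp_real_apply _ _ hA, sInt]

end ProbabilityTheory.Kernel

section Kernels

variable {Ω : Type*} [MeasurableSpace Ω]

lemma ProbabilityTheory.Kernel.givenByKernel_signedComp (κ : Kernel Ω Ω) [IsFiniteKernel κ] :
    GivenByKernel κ.signedComp fun x => (κ x).toSignedMeasure := fun μ A hA => by
  simp only [κ.signedComp_apply μ hA, Measure.toSignedMeasure_apply_measurable hA]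

lemma ProbabilityTheory.Kernel.isBdMeasurable_toSignedMeasure_apply (κ : Kernel Ω Ω)
    [IsFiniteKernel κ] {A : Set Ω} (hA : MeasurableSet A) :
    IsBdMeasurable fun x => (κ x).toSignedMeasure A := by
  simpa only [Measure.toSignedMeasure_apply_measurable hA] using κ.isBdMeasurable_real_apply hA

lemma IsTransKernel.measurable_totalVariation [CountablyGenerated Ω] {k : Ω → SignedMeasure Ω}
    (hk : IsTransKernel k) {A : Set Ω} (hA : MeasurableSet A) :
    Measurable fun x => (k x).totalVariation A := by
  set 𝒜 := generateSetAlgebra (countableGeneratingSet Ω)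
  have hgen : ‹MeasurableSpace Ω› = generateFrom 𝒜 := by
    rw [generateFrom_generateSetAlgebra_eq, generateFrom_countableGeneratingSet]
  have h𝒜 : ∀ B ∈ 𝒜, MeasurableSet B := fun B hB => hgen ▸ measurableSet_generateFrom hB
  have : Countable 𝒜 := (countable_generateSetAlgebra countable_countableGeneratingSet).to_subtype
  have hreal : Measurable fun x => (k x).totalVariation.real A := by
    simp_rw [fun x => (k x).totalVariation_real_eq_iSup
      (.of_generateFrom_isSetAlgebra_finite _ isSetAlgebra_generateSetAlgebra hgen) hA]
    exact .iSup fun B => (hk _ (hA.diff (h𝒜 B B.2))).sub (hk _ (hA.inter (h𝒜 B B.2)))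
  convert hreal.ennreal_ofReal with x
  exact (ofReal_measureReal).symm

noncomputable def IsBddKernel.totalVariationKernel [CountablyGenerated Ω]
    {k : Ω → SignedMeasure Ω} (hk : IsBddKernel k) : Kernel Ω Ω where
  toFun x := (k x).totalVariation
  measurable' := Measure.measurable_of_measurable_coe _ fun _ hA =>
    hk.1.measurable_totalVariation hA

instance IsBddKernel.isFiniteKernel_totalVariationKernel [CountablyGenerated Ω]
    {k : Ω → SignedMeasure Ω} (hk : IsBddKernel k) : IsFiniteKernel hk.totalVariationKernel :=
  let ⟨_, C, hC⟩ := hk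
  ⟨⟨C, ENNReal.coe_lt_top, hC⟩⟩

lemma IsBddKernel.isBdMeasurable_apply {k : Ω → SignedMeasure Ω} (hk : IsBddKernel k)
    {A : Set Ω} (hA : MeasurableSet A) : IsBdMeasurable fun x => k x A :=
  let ⟨hm, C, hC⟩ := hk
  ⟨hm A hA, C, fun x => ((k x).norm_le_totalVariation A).trans <|
    (measureReal_mono (Set.subset_univ A)).trans (ENNReal.toReal_le_coe_of_le_coe (hC x))⟩

variable {T S : SignedMeasure Ω →ₗ[ℝ] SignedMeasure Ω} {k m : Ω → SignedMeasure Ω}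

lemma GivenByKernel.neg (hT : GivenByKernel T k) : GivenByKernel (-T) fun x => -k x :=
  fun μ A hA => by
    simp only [LinearMap.neg_apply, neg_apply, hT μ A hA, sInt_neg]

lemma GivenByKernel.apply_le_apply_of_le (hT : GivenByKernel T k) (hS : GivenByKernel S m)
    (hk : ∀ A, MeasurableSet A → IsBdMeasurable fun x => k x A)
    (hm : ∀ A, MeasurableSet A → IsBdMeasurable fun x => m x A) (hkm : ∀ x, k x ≤ m x)
    {μ : SignedMeasure Ω} (hμ : 0 ≤ μ) : T μ ≤ S μ := by
  refine VectorMeasure.le_iff.2 fun A hA => ?_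
  rw [hT μ A hA, hS μ A hA]
  exact sInt_mono hμ (hk A hA) (hm A hA) fun x => VectorMeasure.le_iff.1 (hkm x) A hA

lemma GivenByKernel.le_of_apply_le (hT : GivenByKernel T k) (hS : GivenByKernel S m)
    (hk : ∀ A, MeasurableSet A → IsBdMeasurable fun x => k x A)
    (hm : ∀ A, MeasurableSet A → IsBdMeasurable fun x => m x A)
    (hTS : ∀ μ, 0 ≤ μ → T μ ≤ S μ) (x : Ω) : k x ≤ m x := by
  refine VectorMeasure.le_iff.2 fun A hA => ?_
  have h := VectorMeasure.le_iff.1 (hTS _ (Measure.dirac x).zero_le_toSignedMeasure) A hA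
  rwa [hT _ A hA, hS _ A hA, sInt_toSignedMeasure _ (hk A hA), sInt_toSignedMeasure _ (hm A hA),
    integral_dirac' _ _ (hk A hA).1.stronglyMeasurable,
    integral_dirac' _ _ (hm A hA).1.stronglyMeasurable] at h

end Kernels

theorem stmt8 {Ω : Type*} [TopologicalSpace Ω] [PolishSpace Ω] [MeasurableSpace Ω] [BorelSpace Ω]
    (T : SignedMeasure Ω →ₗ[ℝ] SignedMeasure Ω) (k : Ω → SignedMeasure Ω)
    (hk : IsBddKernel k) (hT : GivenByKernel T k) :
    ∃ U : SignedMeasure Ω →ₗ[ℝ] SignedMeasure Ω,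
      GivenByKernel U (fun x => ((k x).totalVariation).toSignedMeasure) ∧
      (∀ μ : SignedMeasure Ω, 0 ≤ μ → T μ ≤ U μ ∧ -(T μ) ≤ U μ) ∧
      ∀ (S : SignedMeasure Ω →ₗ[ℝ] SignedMeasure Ω) (m : Ω → SignedMeasure Ω),
        IsBddKernel m → GivenByKernel S m →
        (∀ μ : SignedMeasure Ω, 0 ≤ μ → T μ ≤ S μ ∧ -(T μ) ≤ S μ) →
        ∀ μ : SignedMeasure Ω, 0 ≤ μ → U μ ≤ S μ := by
  set κ := hk.totalVariationKernel
  have hU : GivenByKernel κ.signedComp fun x => (k x).totalVariation.toSignedMeasure :=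
    κ.givenByKernel_signedComp
  have hk_bd A hA := hk.isBdMeasurable_apply (A := A) hA
  have hk_neg_bd A hA := (hk.isBdMeasurable_apply (A := A) hA).neg
  have hκ_bd A hA := κ.isBdMeasurable_toSignedMeasure_apply (A := A) hA
  refine ⟨κ.signedComp, hU, fun μ hμ => ⟨?_, ?_⟩, ?_⟩
  · exact hT.apply_le_apply_of_le hU hk_bd hκ_bd (fun x => (k x).le_totalVariation) hμ
  · exact hT.neg.apply_le_apply_of_le hU hk_neg_bd hκ_bd (fun x => (k x).neg_le_totalVariation) hμ
  intro S m hm hS hTS μ hμ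
  have hm_bd A hA := hm.isBdMeasurable_apply (A := A) hA
  refine hU.apply_le_apply_of_le hS hκ_bd hm_bd
    (fun x => SignedMeasure.totalVariation_le _ ?_ ?_) hμ
  · exact hT.le_of_apply_le hS hk_bd hm_bd (fun ν hν => (hTS ν hν).1) x
  · exact hT.neg.le_of_apply_le hS hk_neg_bd hm_bd (fun ν hν => (hTS ν hν).2) x
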